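/- arXiv:0802.1153 — 2 statements merged into one kernel-verified Lean document; each statement's English description precedes it below -/
import Mathlib

section
/- Two polynomials f and g in the free noncommutative algebra ℝ⟨X,Y⟩ are cyclically equivalent (i.e., for every word v, the sums of coefficients of f and g over words cyclically equivalent to v agree) if and only if f − g is a sum of commutators [p,q] = pq − qp with p, q ∈ ℝ⟨X,Y⟩. -/
/-!
Summing the coefficients of `f` over the cyclic class of each word means reading off the
coefficients of the image of `f` under the linear map `ℝ⟨X,Y⟩ → ℝ[Cycle Bool]` induced by
sending a word to its cyclic class. This map kills commutators, since `ab` and `ba` have the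
same class. Conversely, each word `w = ab` differs from the chosen representative `ba` of its
class by the commutator `[a, b]`, so every `x` is congruent modulo commutators to the lift of
its image through the representatives; if the image vanishes, `x` is a sum of commutators.
-/

open scoped Classical

/-- `ℝ⟨X,Y⟩`, the free noncommutative ℝ-algebra on two variables, realized as the
monoid algebra of the free monoid on two generators. -/
noncomputable abbrev NCPoly := MonoidAlgebra ℝ (FreeMonoid Bool)

def CycEqWord (v w : FreeMonoid Bool) : Prop :=
  ∃ u₁ u₂ : FreeMonoid Bool, v = u₁ * u₂ ∧ w = u₂ * u₁

section Commutators

variable (R A : Type*) [CommRing R] [Ring A] [Algebra R A]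

def commutatorSpan : Submodule R A :=
  Submodule.span R {x | ∃ p q : A, x = p * q - q * p}

variable {R A}

theorem mem_commutatorSpan_iff_exists_sum {x : A} :
    x ∈ commutatorSpan R A ↔
      ∃ (n : ℕ) (p q : Fin n → A), x = ∑ i, (p i * q i - q i * p i) := by
  constructor
  · intro hx
    obtain ⟨n, r, y, rfl⟩ := Submodule.mem_span_set'.mp hx
    choose p q hpq using fun i => (y i).2
    refine ⟨n, fun i => r i • p i, q, Finset.sum_congr rfl fun i _ => ?_⟩
    rw [hpq i, smul_sub, smul_mul_assoc, mul_smul_comm]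
  · rintro ⟨n, p, q, rfl⟩
    exact Submodule.sum_mem _ fun i _ => Submodule.subset_span ⟨p i, q i, rfl⟩

end Commutators

namespace MonoidAlgebra

variable {R M Q : Type*} [CommRing R] [Monoid M] {c : M → Q}

theorem mapDomainLinearMap_mul_comm (hc : ∀ a b, c (a * b) = c (b * a))
    (p q : MonoidAlgebra R M) :
    mapDomainLinearMap R R c (p * q) = mapDomainLinearMap R R c (q * p) := by
  induction p using induction_linear with
  | zero => simp
  | add p₁ p₂ h₁ h₂ => simp only [add_mul, mul_add, map_add, h₁, h₂]
  | single a r =>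
    induction q using induction_linear with
    | zero => simp
    | add q₁ q₂ h₁ h₂ => simp only [add_mul, mul_add, map_add, h₁, h₂]
    | single b s => simp only [single_mul_single, mapDomainLinearMap_single, hc a b, mul_comm r s]

theorem sub_mapDomainLinearMap_mem_commutatorSpan (s : Q → M)
    (hs : ∀ m, ∃ a b, m = a * b ∧ s (c m) = b * a) (x : MonoidAlgebra R M) :
    x - mapDomainLinearMap R R s (mapDomainLinearMap R R c x) ∈
      commutatorSpan R (MonoidAlgebra R M) := by
  induction x using induction_linear with
  | zero => simp
  | add x y hx hy =>
    convert add_mem hx hy using 1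
    simp only [map_add]
    abel
  | single m r =>
    obtain ⟨a, b, rfl, hba⟩ := hs m
    refine Submodule.subset_span ⟨single a r, single b 1, ?_⟩
    simp only [mapDomainLinearMap_single, hba, single_mul_single, mul_one, one_mul]

theorem ker_mapDomainLinearMap_eq_commutatorSpan
    (hc : ∀ m m', c m = c m' ↔ ∃ a b, m = a * b ∧ m' = b * a) :
    LinearMap.ker (mapDomainLinearMap R R c) = commutatorSpan R (MonoidAlgebra R M) := by
  apply le_antisymm
  · intro x hx
    have hs : ∀ m, ∃ a b, m = a * b ∧ Function.invFun c (c m) = b * a := fun m =>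
      (hc m _).mp (Function.invFun_eq ⟨m, rfl⟩).symm
    simpa [LinearMap.mem_ker.mp hx] using
      sub_mapDomainLinearMap_mem_commutatorSpan (R := R) _ hs x
  · refine Submodule.span_le.mpr ?_
    rintro _ ⟨p, q, rfl⟩
    have hswap : ∀ a b, c (a * b) = c (b * a) := fun a b => (hc _ _).mpr ⟨a, b, rfl, rfl⟩
    simp [mapDomainLinearMap_mul_comm hswap]

end MonoidAlgebra

namespace FreeMonoid

variable {α : Type*}

def toCycle (w : FreeMonoid α) : Cycle α := (w.toList : Cycle α)

theorem toCycle_eq_toCycle_iff {v w : FreeMonoid α} :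
    v.toCycle = w.toCycle ↔ ∃ a b, v = a * b ∧ w = b * a := by
  rw [toCycle, toCycle, Cycle.coe_eq_coe, List.isRotated_iff_mod]
  constructor
  · rintro ⟨n, hn, hrot⟩
    refine ⟨ofList (v.toList.take n), ofList (v.toList.drop n), ?_, ?_⟩
    · exact congrArg ofList (List.take_append_drop n _).symm
    · rw [← ofList_toList w, ← hrot, List.rotate_eq_drop_append_take hn]
      rfl
  · rintro ⟨a, b, rfl, rfl⟩
    exact ⟨a.toList.length, by simp, by simp⟩

theorem toCycle_surjective : Function.Surjective (toCycle (α := α)) :=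
  fun q => Quotient.inductionOn q fun l => ⟨ofList l, rfl⟩

end FreeMonoid

theorem sum_coeff_cycEqWord_eq_coeff_toCycle (x : NCPoly) (v : FreeMonoid Bool) :
    ∑ w ∈ x.coeff.support.filter (fun w => CycEqWord v w), x.coeff w =
      (MonoidAlgebra.mapDomainLinearMap ℝ ℝ FreeMonoid.toCycle x).coeff v.toCycle := by
  rw [MonoidAlgebra.coeff_mapDomainLinearMap, Finsupp.mapDomain_apply_eq_sum]
  refine Finset.sum_congr (Finset.filter_congr fun w _ => ?_) fun _ _ => rfl
  rw [eq_comm, FreeMonoid.toCycle_eq_toCycle_iff, CycEqWord]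

/-- Two polynomials `f, g ∈ ℝ⟨X,Y⟩` have, for every word `v`, equal sums of coefficients
over the words cyclically equivalent to `v`, iff `f - g` is a sum of commutators. -/
theorem cycEq_iff_sum_commutators (f g : NCPoly) :
    (∀ v : FreeMonoid Bool,
        ∑ w ∈ f.coeff.support.filter (fun w => CycEqWord v w), f.coeff w =
          ∑ w ∈ g.coeff.support.filter (fun w => CycEqWord v w), g.coeff w) ↔
      ∃ (n : ℕ) (p q : Fin n → NCPoly),
        f - g = ∑ i, (p i * q i - q i * p i) := by
  simp_rw [sum_coeff_cycEqWord_eq_coeff_toCycle]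
  rw [← mem_commutatorSpan_iff_exists_sum (R := ℝ),
    ← MonoidAlgebra.ker_mapDomainLinearMap_eq_commutatorSpan (c := FreeMonoid.toCycle)
      fun _ _ => FreeMonoid.toCycle_eq_toCycle_iff, LinearMap.mem_ker, map_sub, sub_eq_zero,
    ← MonoidAlgebra.coeff_inj, Finsupp.ext_iff, FreeMonoid.toCycle_surjective.forall]
end

section
/- For all m ∈ ℕ with 0 ≤ k ≤ 2 or m−2 ≤ k ≤ m, and all positive semidefinite real matrices A, B of the same size, every word of length m in A, B with exactly k occurrences of B has nonnegative trace; hence tr(S_{m,k}(A,B)) ≥ 0. -/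
/-!
By cyclicity of the trace, a word with at most two `B`s rotates to `A ^ p`, `B * A ^ p` or
`(B * A ^ p * B) * A ^ q`, a product of at most two positive semidefinite matrices; and
`tr (C⋆ C N) = tr (C N C⋆) ≥ 0` for positive semidefinite `N`. Exchanging the roles of `A`
and `B` handles words with at most two `A`s.
-/

/-- All words of length `m` in the alphabet {A = false, B = true} with exactly `k`
occurrences of `B`. -/
def wordsMK (m k : ℕ) : Finset (List Bool) :=
  (((Finset.univ : Finset (Fin m → Bool)).image fun f => List.ofFn f).filter
    fun w => w.count true = k)

/-- Evaluation of a word: replace `false` by `A`, `true` by `B`, and multiply. -/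
def evalWord {n : ℕ} (A B : Matrix (Fin n) (Fin n) ℝ) (w : List Bool) :
    Matrix (Fin n) (Fin n) ℝ :=
  (w.map fun b => if b then B else A).prod

open Matrix

open scoped ComplexOrder in
theorem Matrix.PosSemidef.trace_mul_nonneg {n 𝕜 : Type*} [Fintype n] [RCLike 𝕜]
    {M N : Matrix n n 𝕜} (hM : M.PosSemidef) (hN : N.PosSemidef) : 0 ≤ (M * N).trace := by
  classical
  obtain ⟨C, rfl⟩ : ∃ C : Matrix n n 𝕜, M = star C * C := by
    open scoped MatrixOrder in
    exact CStarAlgebra.nonneg_iff_eq_star_mul_self.mp hM.nonneg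
  rw [Matrix.mul_assoc, trace_mul_comm, star_eq_conjTranspose]
  exact (hN.mul_mul_conjTranspose_same C).trace_nonneg

theorem List.eq_replicate_false_of_count_true_eq_zero {w : List Bool} (h : w.count true = 0) :
    w = List.replicate w.length false :=
  List.eq_replicate_of_mem fun b hb => by
    cases b
    · rfl
    · exact absurd hb (List.count_eq_zero.mp h)

theorem mem_wordsMK {m k : ℕ} {w : List Bool} :
    w ∈ wordsMK m k ↔ w.length = m ∧ w.count true = k := by
  simp only [wordsMK, Finset.mem_filter, Finset.mem_image, Finset.mem_univ, true_and]
  refine and_congr_left fun _ => ⟨?_, ?_⟩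
  · rintro ⟨f, rfl⟩
    exact List.length_ofFn
  · rintro rfl
    exact ⟨fun i => w[i], List.ofFn_getElem⟩

section evalWord

variable {n : ℕ} (A B : Matrix (Fin n) (Fin n) ℝ)

@[simp] theorem evalWord_cons (b : Bool) (w : List Bool) :
    evalWord A B (b :: w) = (if b then B else A) * evalWord A B w := List.prod_cons

@[simp] theorem evalWord_append (u v : List Bool) :
    evalWord A B (u ++ v) = evalWord A B u * evalWord A B v := by
  simp only [evalWord, List.map_append, List.prod_append]

@[simp] theorem evalWord_replicate_false (j : ℕ) :
    evalWord A B (List.replicate j false) = A ^ j := by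
  simp [evalWord]

theorem evalWord_map_not (w : List Bool) : evalWord B A (w.map not) = evalWord A B w := by
  simp only [evalWord, List.map_map]
  congr 2
  funext b
  cases b <;> rfl

theorem trace_evalWord_append_comm (u v : List Bool) :
    (evalWord A B (u ++ v)).trace = (evalWord A B (v ++ u)).trace := by
  rw [evalWord_append, evalWord_append, trace_mul_comm]

theorem exists_trace_evalWord_eq_trace_mul {w : List Bool} {k : ℕ}
    (hw : w.count true = k + 1) :
    ∃ t : List Bool, t.count true = k ∧ (evalWord A B w).trace = (B * evalWord A B t).trace := by
  have hmem : true ∈ w := List.count_pos_iff.mp (by omega)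
  obtain ⟨u, v, rfl⟩ := List.append_of_mem hmem
  refine ⟨v ++ u, ?_, ?_⟩
  · simp only [List.count_append, List.count_cons_self] at hw ⊢
    omega
  · rw [trace_evalWord_append_comm]
    simp only [List.cons_append, evalWord_cons, if_pos, evalWord_append]

theorem evalWord_eq_pow_of_count_true_eq_zero {w : List Bool} (hw : w.count true = 0) :
    evalWord A B w = A ^ w.length := by
  rw [List.eq_replicate_false_of_count_true_eq_zero hw, evalWord_replicate_false,
    List.length_replicate]

variable {A B}

theorem trace_evalWord_nonneg_of_count_true_le_two (hA : A.PosSemidef) (hB : B.PosSemidef)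
    {w : List Bool} (hw : w.count true ≤ 2) : 0 ≤ (evalWord A B w).trace := by
  interval_cases hk : w.count true
  · rw [evalWord_eq_pow_of_count_true_eq_zero A B hk]
    exact (hA.pow _).trace_nonneg
  · obtain ⟨t, ht, htrace⟩ := exists_trace_evalWord_eq_trace_mul A B hk
    rw [htrace, evalWord_eq_pow_of_count_true_eq_zero A B ht]
    exact hB.trace_mul_nonneg (hA.pow _)
  · obtain ⟨t, ht, htrace⟩ := exists_trace_evalWord_eq_trace_mul A B hk
    have hmem : true ∈ t := List.count_pos_iff.mp (by omega)
    obtain ⟨u, v, rfl⟩ := List.append_of_mem hmem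
    obtain ⟨hu, hv⟩ : u.count true = 0 ∧ v.count true = 0 := by
      simp only [List.count_append, List.count_cons_self] at ht
      omega
    have hBAB : (B * A ^ u.length * B).PosSemidef := by
      simpa only [hB.isHermitian.eq] using (hA.pow u.length).conjTranspose_mul_mul_same B
    rw [htrace, evalWord_append, evalWord_cons, if_pos rfl,
      evalWord_eq_pow_of_count_true_eq_zero A B hu, evalWord_eq_pow_of_count_true_eq_zero A B hv]
    simpa only [Matrix.mul_assoc] using hBAB.trace_mul_nonneg (hA.pow v.length)

theorem trace_evalWord_nonneg_of_count_false_le_two (hA : A.PosSemidef) (hB : B.PosSemidef)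
    {w : List Bool} (hw : w.count false ≤ 2) : 0 ≤ (evalWord A B w).trace := by
  rw [← evalWord_map_not]
  refine trace_evalWord_nonneg_of_count_true_le_two hB hA ?_
  rwa [← Bool.not_false, List.count_map_of_injective _ _ Bool.not_injective]

end evalWord

/-- If `0 ≤ k ≤ 2` or `m − 2 ≤ k ≤ m`, then for positive semidefinite real `A`, `B`,
every word of length `m` in `A`, `B` with exactly `k` occurrences of `B` has nonnegative
trace; hence `tr(S_{m,k}(A,B)) ≥ 0`. -/
theorem trace_words_nonneg_small_k (n m k : ℕ)
    (hk : k ≤ 2 ∨ (m ≤ k + 2 ∧ k ≤ m))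
    (A B : Matrix (Fin n) (Fin n) ℝ) (hA : A.PosSemidef) (hB : B.PosSemidef) :
    (∀ w : List Bool, w.length = m → w.count true = k → 0 ≤ (evalWord A B w).trace) ∧
    0 ≤ (∑ w ∈ wordsMK m k, evalWord A B w).trace := by
  have hword : ∀ w : List Bool, w.length = m → w.count true = k →
      0 ≤ (evalWord A B w).trace := by
    rintro w rfl rfl
    rcases hk with hk | ⟨hk, -⟩
    · exact trace_evalWord_nonneg_of_count_true_le_two hA hB hk
    · have := w.count_false_add_count_true
      exact trace_evalWord_nonneg_of_count_false_le_two hA hB (by omega)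
  refine ⟨hword, ?_⟩
  rw [trace_sum]
  exact Finset.sum_nonneg fun w hw => hword w (mem_wordsMK.mp hw).1 (mem_wordsMK.mp hw).2
end
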